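/- In the linearly ordered set W of truth values, every subset M ⊆ W has a least upper bound sup M and a greatest lower bound inf M in W. Moreover, if sup M is a true value T_α for some countable ordinal α, then sup M ∈ M, and if inf M is a false value F_α for some countable ordinal α, then inf M ∈ M. -/

import Mathlib

/-!
Infinite-valued semantics for formula-based logic programs
(Rondogiannis–Wadge style), following Lüdecke,
"Every Formula-Based Logic Program Has a Least Infinite-Valued Model".
-/

noncomputable section

namespace ILP

attribute [local instance] Classical.propDecidable

/-- The first uncountable ordinal. -/
def omega1 : Ordinal.{0} := Ordinal.omega 1

lemma omega1_isLimit : Order.IsSuccLimit omega1 := Cardinal.isSuccLimit_omega 1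

lemma zero_lt_omega1 : (0 : Ordinal) < omega1 := omega1_isLimit.pos

lemma succ_lt_omega1 {a : Ordinal} (h : a < omega1) : a + 1 < omega1 := by
  rw [Ordinal.add_one_eq_succ]
  exact omega1_isLimit.succ_lt h

/-- Pre-truth-values: `F α`, `0`, `T α` for arbitrary ordinals `α`. -/
inductive TVPre : Type 1 where
  | F : Ordinal → TVPre
  | zero : TVPre
  | T : Ordinal → TVPre

/-- A pre-truth-value is countable if its index is a countable ordinal. -/
def TVPre.countable : TVPre → Prop
  | .F a => a < omega1
  | .zero => True
  | .T a => a < omega1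

/-- The set `W` of truth values:
`F_α` (false values) for countable `α`, `0`, and `T_α` (true values) for countable `α`. -/
def W : Type 1 := {v : TVPre // v.countable}

/-- The strict order on truth values:
`F_0 < F_1 < ... < 0 < ... < T_1 < T_0`. -/
def TVPre.lt : TVPre → TVPre → Prop
  | .F a, .F b => a < b
  | .F _, .zero => True
  | .F _, .T _ => True
  | .zero, .T _ => True
  | .T a, .T b => b < a
  | _, _ => False

instance : LT W := ⟨fun x y => TVPre.lt x.1 y.1⟩

instance : LE W := ⟨fun x y => x = y ∨ x < y⟩

lemma TVPre.lt_trans {a b c : TVPre} (hab : a.lt b) (hbc : b.lt c) : a.lt c := by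
  cases a <;> cases b <;> cases c <;> simp_all [TVPre.lt] <;>
    first | exact hab.trans hbc | exact hbc.trans hab

lemma TVPre.lt_irrefl {a : TVPre} (h : a.lt a) : False := by
  cases a <;> simp_all [TVPre.lt]

instance instLinearOrderW : LinearOrder W where
  le_refl a := Or.inl rfl
  le_trans a b c hab hbc := by
    rcases hab with rfl | hab
    · exact hbc
    rcases hbc with rfl | hbc
    · exact Or.inr hab
    · exact Or.inr (TVPre.lt_trans hab hbc)
  le_antisymm a b hab hba := by
    rcases hab with rfl | hab
    · rfl
    rcases hba with rfl | hba
    · rfl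
    exact absurd (TVPre.lt_trans hab hba) TVPre.lt_irrefl
  le_total a b := by
    obtain ⟨a1, ha⟩ := a
    obtain ⟨b1, hb⟩ := b
    have tri : a1 = b1 ∨ a1.lt b1 ∨ b1.lt a1 := by
      cases a1 <;> cases b1 <;> simp [TVPre.lt] <;> (try rename_i x y) <;>
        (try rcases lt_trichotomy x y with h | h | h) <;> tauto
    rcases tri with h | h | h
    · exact Or.inl (Or.inl (Subtype.ext h))
    · exact Or.inl (Or.inr h)
    · exact Or.inr (Or.inr h)
  lt_iff_le_not_ge a b := by
    constructor
    · intro h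
      refine ⟨Or.inr h, ?_⟩
      rintro (rfl | h')
      · exact TVPre.lt_irrefl h
      · exact TVPre.lt_irrefl (TVPre.lt_trans h h')
    · rintro ⟨rfl | h, h2⟩
      · exact absurd (Or.inl rfl) h2
      · exact h
  toDecidableLE := Classical.decRel _

/-- The false value `F_α`. -/
def WF (a : Ordinal) (h : a < omega1) : W := ⟨.F a, h⟩

/-- The true value `T_α`. -/
def WT (a : Ordinal) (h : a < omega1) : W := ⟨.T a, h⟩

/-- The undefined value `0`. -/
def WZ : W := ⟨.zero, trivial⟩

/-- `deg w < α` : the degree of `w` (which is `∞` for `0`) is less than `α`. -/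
def degLT (w : W) (α : Ordinal) : Prop :=
  match w.1 with
  | .F a => a < α
  | .zero => False
  | .T a => a < α

/-- The set of indices of true values occurring in `M`. -/
def TIdx (M : Set W) : Set Ordinal := {a | ∃ w ∈ M, w.1 = TVPre.T a}

/-- The set of indices of false values occurring in `M`. -/
def FIdx (M : Set W) : Set Ordinal := {a | ∃ w ∈ M, w.1 = TVPre.F a}

lemma mem_lt_omega1_of_TIdx {M : Set W} {a : Ordinal} (h : a ∈ TIdx M) : a < omega1 := by
  obtain ⟨w, _, hw⟩ := h
  have := w.2
  rw [hw] at this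
  exact this

lemma mem_lt_omega1_of_FIdx {M : Set W} {a : Ordinal} (h : a ∈ FIdx M) : a < omega1 := by
  obtain ⟨w, _, hw⟩ := h
  have := w.2
  rw [hw] at this
  exact this

/-- The least upper bound of a subset of `W`. -/
def Wsup (M : Set W) : W :=
  if h : (TIdx M).Nonempty then
    WT (sInf (TIdx M))
      (lt_of_le_of_lt (csInf_le' h.choose_spec) (mem_lt_omega1_of_TIdx h.choose_spec))
  else if WZ ∈ M then WZ
  else if h2 : sSup (FIdx M) < omega1 then WF (sSup (FIdx M)) h2
  else WZ

/-- The greatest lower bound of a subset of `W`. -/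
def Winf (M : Set W) : W :=
  if h : (FIdx M).Nonempty then
    WF (sInf (FIdx M))
      (lt_of_le_of_lt (csInf_le' h.choose_spec) (mem_lt_omega1_of_FIdx h.choose_spec))
  else if WZ ∈ M then WZ
  else if h2 : sSup (TIdx M) < omega1 then WT (sSup (TIdx M)) h2
  else WZ

/-- The semantics of negation on `W`. -/
def Wneg : W → W
  | ⟨.F a, h⟩ => WT (a + 1) (succ_lt_omega1 h)
  | ⟨.zero, _⟩ => WZ
  | ⟨.T a, h⟩ => WF (a + 1) (succ_lt_omega1 h)

/-! ### Syntax -/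

/-- A first-order language with finitely many predicate symbols (at least one),
finitely many function symbols and finitely many constants (at least one). -/
structure Language where
  nPred : ℕ
  predAr : Fin nPred → ℕ
  nFun : ℕ
  funAr : Fin nFun → ℕ
  nConst : ℕ
  npos : 1 ≤ nPred
  cpos : 1 ≤ nConst

variable {L : Language}

/-- Terms of the language; variables are indexed by natural numbers. -/
inductive Term (L : Language) : Type where
  | var : ℕ → Term L
  | const : Fin L.nConst → Term L
  | func : (f : Fin L.nFun) → (Fin (L.funAr f) → Term L) → Term L

/-- A term is ground if it contains no variables. -/
def Term.ground : Term L → Prop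
  | .var _ => False
  | .const _ => True
  | .func _ ts => ∀ i, (ts i).ground

/-- The Herbrand universe: the set of ground terms. -/
def HU (L : Language) : Type := {t : Term L // t.ground}

/-- Formulas of the language. -/
inductive Formula (L : Language) : Type where
  | verum : Formula L
  | falsum : Formula L
  | atom : (p : Fin L.nPred) → (Fin (L.predAr p) → Term L) → Formula L
  | neg : Formula L → Formula L
  | conj : Formula L → Formula L → Formula L
  | disj : Formula L → Formula L → Formula L
  | all : ℕ → Formula L → Formula L
  | ex : ℕ → Formula L → Formula L

/-- A ground atom: a predicate symbol applied to ground terms.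
The Herbrand base `H_B` is the type of ground atoms. -/
structure GroundAtom (L : Language) : Type where
  pred : Fin L.nPred
  args : Fin (L.predAr pred) → HU L

/-- An (infinite-valued Herbrand) interpretation. -/
def Interp (L : Language) : Type 1 := GroundAtom L → W

/-- Evaluation of a term under a variable assignment. -/
def Term.evalT (h : ℕ → HU L) : Term L → HU L
  | .var n => h n
  | .const c => ⟨.const c, trivial⟩
  | .func f ts => ⟨.func f fun i => ((ts i).evalT h).1, fun i => ((ts i).evalT h).2⟩

/-- The infinite-valued semantics of formulas, relative to an interpretation and
a variable assignment. -/
def Formula.eval (I : Interp L) : Formula L → (ℕ → HU L) → W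
  | .verum, _ => WT 0 zero_lt_omega1
  | .falsum, _ => WF 0 zero_lt_omega1
  | .atom p ts, h => I ⟨p, fun i => (ts i).evalT h⟩
  | .neg φ, h => Wneg (φ.eval I h)
  | .conj φ ψ, h => min (φ.eval I h) (ψ.eval I h)
  | .disj φ ψ, h => max (φ.eval I h) (ψ.eval I h)
  | .ex v φ, h => Wsup (Set.range fun u : HU L => φ.eval I (Function.update h v u))
  | .all v φ, h => Winf (Set.range fun u : HU L => φ.eval I (Function.update h v u))

/-- The variables occurring in a term. -/
def Term.vars : Term L → Set ℕ
  | .var n => {n}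
  | .const _ => ∅
  | .func _ ts => ⋃ i, (ts i).vars

/-- The free variables of a formula. -/
def Formula.freeVars : Formula L → Set ℕ
  | .verum => ∅
  | .falsum => ∅
  | .atom _ ts => ⋃ i, (ts i).vars
  | .neg φ => φ.freeVars
  | .conj φ ψ => φ.freeVars ∪ ψ.freeVars
  | .disj φ ψ => φ.freeVars ∪ ψ.freeVars
  | .all v φ => φ.freeVars \ {v}
  | .ex v φ => φ.freeVars \ {v}

/-- Applying a substitution to a term. -/
def Term.subst (σ : ℕ → Term L) : Term L → Term L
  | .var n => σ n
  | .const c => .const c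
  | .func f ts => .func f fun i => (ts i).subst σ

/-- Applying a substitution to a formula (bound variables are not substituted). -/
def Formula.subst (σ : ℕ → Term L) : Formula L → Formula L
  | .verum => .verum
  | .falsum => .falsum
  | .atom p ts => .atom p fun i => (ts i).subst σ
  | .neg φ => .neg (φ.subst σ)
  | .conj φ ψ => .conj (φ.subst σ) (ψ.subst σ)
  | .disj φ ψ => .disj (φ.subst σ) (ψ.subst σ)
  | .all v φ => .all v (φ.subst (Function.update σ v (Term.var v)))
  | .ex v φ => .ex v (φ.subst (Function.update σ v (Term.var v)))

/-- A formula-based rule `A ← φ`: the head is an atom `P(t₁,…,tₛ)`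
(hence distinct from `⊤` and `⊥`) and the body is an arbitrary formula. -/
structure Rule (L : Language) : Type where
  headPred : Fin L.nPred
  headArgs : Fin (L.predAr headPred) → Term L
  body : Formula L

/-- The head of a rule, as an atomic formula. -/
def Rule.headAtom (r : Rule L) : Formula L := .atom r.headPred r.headArgs

/-- A formula-based logic program: a finite set of formula-based rules. -/
structure Program (L : Language) : Type where
  rules : Set (Rule L)
  finite : rules.Finite

/-- The set `P_G` of ground instances of a program `P`: pairs `(Aσ, φσ)` obtained
from a rule `A ← φ` of `P` and a substitution `σ` such that `Aσ` is a ground atom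
and `φσ` has no free variables. -/
def groundInstances (P : Program L) : Set (GroundAtom L × Formula L) :=
  {Aφ | ∃ r ∈ P.rules, ∃ σ : ℕ → Term L,
    (∃ hg : ∀ i, ((r.headArgs i).subst σ).ground,
      Aφ.1 = ⟨r.headPred, fun i => ⟨(r.headArgs i).subst σ, hg i⟩⟩) ∧
    Aφ.2 = r.body.subst σ ∧ (r.body.subst σ).freeVars = ∅}

/-- A default variable assignment (possible since there is at least one constant). -/
def defaultAssignment (L : Language) : ℕ → HU L :=
  fun _ => ⟨.const ⟨0, L.cpos⟩, trivial⟩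

/-- The value of a closed formula (independent of the variable assignment). -/
def Formula.evalClosed (I : Interp L) (φ : Formula L) : W :=
  φ.eval I (defaultAssignment L)

/-- The immediate consequence operator `T_P`. -/
def TP (P : Program L) (I : Interp L) : Interp L :=
  fun A => Wsup {w | ∃ φ : Formula L, (A, φ) ∈ groundInstances P ∧ w = φ.evalClosed I}

/-- `I ∥ F_β` : the set of ground atoms receiving value `F_β` under `I`. -/
def Ifalse (I : Interp L) (β : Ordinal) : Set (GroundAtom L) := {A | (I A).1 = TVPre.F β}

/-- `I ∥ T_β` : the set of ground atoms receiving value `T_β` under `I`. -/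
def Itrue (I : Interp L) (β : Ordinal) : Set (GroundAtom L) := {A | (I A).1 = TVPre.T β}

/-- `I =_α J`. -/
def eqa (α : Ordinal) (I J : Interp L) : Prop :=
  ∀ β ≤ α, Ifalse I β = Ifalse J β ∧ Itrue I β = Itrue J β

/-- `I ⊑_α J`. -/
def sqa (α : Ordinal) (I J : Interp L) : Prop :=
  (∀ β < α, eqa β I J) ∧ Ifalse J α ⊆ Ifalse I α ∧ Itrue I α ⊆ Itrue J α

/-- `I ⊏_α J`. -/
def sqlt (α : Ordinal) (I J : Interp L) : Prop := sqa α I J ∧ ¬ eqa α I J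

/-- `I ⊑_∞ J`. -/
def sqinf (I J : Interp L) : Prop := I = J ∨ ∃ α < omega1, sqlt α I J

/-- `I` satisfies the rule `A ← φ`. -/
def satisfies (I : Interp L) (r : Rule L) : Prop :=
  ∀ h : ℕ → HU L, r.body.eval I h ≤ r.headAtom.eval I h

/-- `I` is a model of `P`. -/
def isModel (I : Interp L) (P : Program L) : Prop := ∀ r ∈ P.rules, satisfies I r

/-- The transfinite iterates `T^β_{P,α}(I)`. -/
def iter (P : Program L) (α : Ordinal) (hα : α < omega1) (I : Interp L)
    (β : Ordinal) : Interp L :=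
  Ordinal.limitRecOn β I (fun _ J => TP P J)
    (fun β _ ih A =>
      if degLT (I A) α then I A
      else if ∃ γ, ∃ hγ : γ < β, (ih γ hγ A).1 = TVPre.T α then WT α hα
      else if ∀ γ, ∀ hγ : γ < β, (ih γ hγ A).1 = TVPre.F α then WF α hα
      else WF (α + 1) (succ_lt_omega1 hα))

/-- The union `⊔_{γ<α} I_γ` of a family of interpretations. -/
def unionInterp (α : Ordinal) (hα : α < omega1) (Ig : ∀ γ, γ < α → Interp L) :
    Interp L := fun A =>
  if h : ∃ ζ, ∃ hζ : ζ < α, ((Ig ζ hζ) A).1 = TVPre.F ζ ∨ ((Ig ζ hζ) A).1 = TVPre.T ζ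
  then Ig h.choose h.choose_spec.choose A
  else WF α hα

/-- The approximants `M_α` of a program `P`. -/
def approx (P : Program L) (α : Ordinal) : Interp L :=
  if hα : α < omega1 then
    if (∀ γ, ∀ _ : γ < α, ∀ ζ, ζ < γ → eqa ζ (approx P ζ) (approx P γ)) ∧
        sqa α (unionInterp α hα fun γ _ => approx P γ)
          (TP P (unionInterp α hα fun γ _ => approx P γ))
    then iter P α hα (unionInterp α hα fun γ _ => approx P γ) omega1
    else fun _ => WF 0 zero_lt_omega1
  else fun _ => WF 0 zero_lt_omega1
termination_by α
decreasing_by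
  all_goals first | assumption | exact lt_trans ‹_› ‹_›

/-- The depth `δ_P` of a program `P`. -/
def depth (P : Program L) : Ordinal :=
  sInf {δ | δ < omega1 ∧ ∀ γ, δ ≤ γ → γ < omega1 →
    Ifalse (approx P γ) γ = ∅ ∧ Itrue (approx P γ) γ = ∅}

/-- The least infinite-valued model `M_P` of a program `P`. -/
def MP (P : Program L) : Interp L := fun A =>
  if degLT (approx P (depth P) A) (depth P) then approx P (depth P) A else WZ

/-! ### Three-valued semantics -/

/-- The three truth values `F < 0 < T`. -/
inductive TV3 : Type where
  | F : TV3
  | Z : TV3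
  | T : TV3
deriving DecidableEq

/-- Numeric coding of the three truth values. -/
def TV3.toNat : TV3 → ℕ
  | .F => 0
  | .Z => 1
  | .T => 2

instance : LinearOrder TV3 :=
  LinearOrder.lift' TV3.toNat (fun a b => by
    cases a <;> cases b <;> simp [TV3.toNat])

/-- A three-valued interpretation. -/
def Interp3 (L : Language) : Type := GroundAtom L → TV3

/-- Supremum of a set of three-valued truth values. -/
def sup3 (S : Set TV3) : TV3 :=
  if TV3.T ∈ S then .T else if TV3.Z ∈ S then .Z else .F

/-- Infimum of a set of three-valued truth values. -/
def inf3 (S : Set TV3) : TV3 :=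
  if TV3.F ∈ S then .F else if TV3.Z ∈ S then .Z else .T

/-- Three-valued negation. -/
def neg3 : TV3 → TV3
  | .F => .T
  | .Z => .Z
  | .T => .F

/-- The three-valued semantics of formulas. -/
def Formula.eval3 (K : Interp3 L) : Formula L → (ℕ → HU L) → TV3
  | .verum, _ => .T
  | .falsum, _ => .F
  | .atom p ts, h => K ⟨p, fun i => (ts i).evalT h⟩
  | .neg φ, h => neg3 (φ.eval3 K h)
  | .conj φ ψ, h => min (φ.eval3 K h) (ψ.eval3 K h)
  | .disj φ ψ, h => max (φ.eval3 K h) (ψ.eval3 K h)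
  | .ex v φ, h => sup3 (Set.range fun u : HU L => φ.eval3 K (Function.update h v u))
  | .all v φ, h => inf3 (Set.range fun u : HU L => φ.eval3 K (Function.update h v u))

/-- Collapsing all false values to `F` and all true values to `T`. -/
def collapse : W → TV3 := fun w =>
  match w.1 with
  | .F _ => .F
  | .zero => .Z
  | .T _ => .T

/-- The collapse of an infinite-valued interpretation. -/
def collapseI (I : Interp L) : Interp3 L := fun A => collapse (I A)

/-- `K` is a three-valued model of `P`. -/
def isModel3 (K : Interp3 L) (P : Program L) : Prop :=
  ∀ r ∈ P.rules, ∀ h : ℕ → HU L, r.body.eval3 K h ≤ r.headAtom.eval3 K h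

/-- The three-valued interpretation `M_{P,3}`. -/
def MP3 (P : Program L) : Interp3 L := collapseI (MP P)

/-- The negation degree of a formula. -/
def Formula.negDeg : Formula L → ℕ
  | .verum => 0
  | .falsum => 0
  | .atom _ _ => 0
  | .neg φ => φ.negDeg + 1
  | .conj φ ψ => max φ.negDeg ψ.negDeg
  | .disj φ ψ => max φ.negDeg ψ.negDeg
  | .all _ φ => φ.negDeg
  | .ex _ φ => φ.negDeg

/-!
The false values are well ordered by `<` and the true values by `>`. Hence a set `M` containing
a true value has a greatest element, which is its supremum; if it contains none, its supremum is
`0` when `0 ∈ M` or when the indices of its false values are cofinal in `ω₁`, and `F_β` for `β`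
their supremum otherwise. Infima reduce to suprema through the order-reversing involution
`F_α ↔ T_α`.
-/

namespace W

@[elab_as_elim]
lemma induction {motive : W → Prop} (F : ∀ a ha, motive (WF a ha)) (zero : motive WZ)
    (T : ∀ a ha, motive (WT a ha)) (x : W) : motive x := by
  obtain ⟨v, hv⟩ := x
  cases v with
  | F a => exact F a hv
  | zero => exact zero
  | T a => exact T a hv

end W

section Order

variable {a b : Ordinal} {ha : a < omega1} {hb : b < omega1}

lemma WF_lt_WF : WF a ha < WF b hb ↔ a < b := Iff.rfl

lemma WT_lt_WT : WT a ha < WT b hb ↔ b < a := Iff.rfl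

lemma WF_le_WF : WF a ha ≤ WF b hb ↔ a ≤ b := by rw [← not_lt, WF_lt_WF, not_lt]

lemma WT_le_WT : WT a ha ≤ WT b hb ↔ b ≤ a := by rw [← not_lt, WT_lt_WT, not_lt]

lemma WF_lt_WZ : WF a ha < WZ := trivial

lemma WZ_lt_WT : WZ < WT a ha := trivial

end Order

section Indices

variable {M : Set W} {a : Ordinal}

lemma mem_TIdx_iff : a ∈ TIdx M ↔ ∃ ha : a < omega1, WT a ha ∈ M := by
  constructor
  · rintro ⟨⟨v, hv⟩, hw, rfl : v = _⟩
    exact ⟨hv, hw⟩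
  · rintro ⟨_, hw⟩
    exact ⟨_, hw, rfl⟩

lemma mem_FIdx_iff : a ∈ FIdx M ↔ ∃ ha : a < omega1, WF a ha ∈ M := by
  constructor
  · rintro ⟨⟨v, hv⟩, hw, rfl : v = _⟩
    exact ⟨hv, hw⟩
  · rintro ⟨_, hw⟩
    exact ⟨_, hw, rfl⟩

lemma bddAbove_FIdx (M : Set W) : BddAbove (FIdx M) :=
  ⟨omega1, fun _ hc => (mem_lt_omega1_of_FIdx hc).le⟩

end Indices

section Supremum

variable {M : Set W}

lemma isGreatest_WT_sInf_TIdx (hT : (TIdx M).Nonempty) (hlt : sInf (TIdx M) < omega1) :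
    IsGreatest M (WT (sInf (TIdx M)) hlt) := by
  obtain ⟨_, hmem⟩ := mem_TIdx_iff.1 (csInf_mem hT)
  refine ⟨hmem, fun x hx => ?_⟩
  induction x using W.induction with
  | F => exact (WF_lt_WZ.trans WZ_lt_WT).le
  | zero => exact WZ_lt_WT.le
  | T c hc => exact WT_le_WT.2 (csInf_le' (mem_TIdx_iff.2 ⟨hc, hx⟩))

lemma WZ_mem_upperBounds (hT : ¬(TIdx M).Nonempty) : WZ ∈ upperBounds M := by
  intro x hx
  induction x using W.induction with
  | F => exact WF_lt_WZ.le
  | zero => exact le_rfl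
  | T c hc => exact absurd ⟨c, mem_TIdx_iff.2 ⟨hc, hx⟩⟩ hT

lemma lt_WZ_of_mem (hT : ¬(TIdx M).Nonempty) (hZ : WZ ∉ M) : ∀ x ∈ M, x < WZ :=
  fun _ hx => (WZ_mem_upperBounds hT hx).lt_of_ne (ne_of_mem_of_not_mem hx hZ)

lemma WF_mem_upperBounds_iff (hM : ∀ x ∈ M, x < WZ) {d : Ordinal} (hd : d < omega1) :
    WF d hd ∈ upperBounds M ↔ sSup (FIdx M) ≤ d := by
  rw [csSup_le_iff' (bddAbove_FIdx M)]
  constructor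
  · intro h c hc
    obtain ⟨_, hx⟩ := mem_FIdx_iff.1 hc
    exact WF_le_WF.1 (h hx)
  · intro h x hx
    induction x using W.induction with
    | F c hc => exact WF_le_WF.2 (h c (mem_FIdx_iff.2 ⟨hc, hx⟩))
    | zero => exact absurd (hM _ hx) (lt_irrefl _)
    | T => exact absurd (hM _ hx) (not_lt.2 WZ_lt_WT.le)

lemma isLUB_WF_sSup_FIdx (hM : ∀ x ∈ M, x < WZ) (hlt : sSup (FIdx M) < omega1) :
    IsLUB M (WF (sSup (FIdx M)) hlt) := by
  have hZ : WZ ∈ upperBounds M := fun x hx => (hM x hx).le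
  refine isLUB_iff_le_iff.2 fun u => ?_
  induction u using W.induction with
  | F d hd => rw [WF_le_WF, WF_mem_upperBounds_iff hM hd]
  | zero => exact iff_of_true WF_lt_WZ.le hZ
  | T => exact iff_of_true (WF_lt_WZ.trans WZ_lt_WT).le (upperBounds_mono_mem WZ_lt_WT.le hZ)

lemma isLUB_WZ_of_omega1_le_sSup_FIdx (hM : ∀ x ∈ M, x < WZ) (hle : omega1 ≤ sSup (FIdx M)) :
    IsLUB M WZ := by
  refine ⟨fun x hx => (hM x hx).le, fun u hu => ?_⟩
  induction u using W.induction with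
  | F d hd => exact absurd (((WF_mem_upperBounds_iff hM hd).1 hu).trans_lt hd) hle.not_gt
  | zero => exact le_rfl
  | T => exact WZ_lt_WT.le

theorem isLUB_Wsup (M : Set W) : IsLUB M (Wsup M) := by
  unfold Wsup
  split_ifs with hT hZ hF
  · exact (isGreatest_WT_sInf_TIdx hT _).isLUB
  · exact ⟨WZ_mem_upperBounds hT, fun _ hu => hu hZ⟩
  · exact isLUB_WF_sSup_FIdx (lt_WZ_of_mem hT hZ) hF
  · exact isLUB_WZ_of_omega1_le_sSup_FIdx (lt_WZ_of_mem hT hZ) (not_lt.1 hF)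

theorem mem_of_isLUB_of_eq_WT {s : W} (hs : IsLUB M s) {a : Ordinal} {ha : a < omega1}
    (hsa : s = WT a ha) : s ∈ M := by
  have hT : (TIdx M).Nonempty := by
    by_contra hT
    exact (hs.2 (WZ_mem_upperBounds hT)).not_gt (hsa ▸ WZ_lt_WT)
  have hgreatest := isGreatest_WT_sInf_TIdx hT (mem_lt_omega1_of_TIdx (csInf_mem hT))
  rw [hs.unique hgreatest.isLUB]
  exact hgreatest.1

end Supremum

def TVPre.swap : TVPre → TVPre
  | .F a => .T a
  | .zero => .zero
  | .T a => .F a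

namespace W

def swap (x : W) : W :=
  ⟨x.1.swap, by obtain ⟨v, hv⟩ := x; cases v <;> exact hv⟩

lemma swap_swap (x : W) : x.swap.swap = x := by
  induction x using W.induction <;> rfl

lemma swap_lt_swap {x y : W} : x.swap < y.swap ↔ y < x := by
  induction x using W.induction <;> induction y using W.induction <;> exact Iff.rfl

def swapIso : W ≃o Wᵒᵈ where
  toFun x := OrderDual.toDual x.swap
  invFun x := (OrderDual.ofDual x).swap
  left_inv := swap_swap
  right_inv := swap_swap
  map_rel_iff' {x y} := by
    change y.swap ≤ x.swap ↔ x ≤ y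
    rw [← not_lt, swap_lt_swap, not_lt]

lemma isGLB_iff_isLUB_swap_image {M : Set W} {s : W} :
    IsGLB M s ↔ IsLUB (swap '' M) s.swap :=
  swapIso.isGLB_image'.symm

end W

theorem isGLB_swap_Wsup_swap_image (M : Set W) : IsGLB M (Wsup (W.swap '' M)).swap := by
  rw [W.isGLB_iff_isLUB_swap_image, W.swap_swap]
  exact isLUB_Wsup _

theorem mem_of_isGLB_of_eq_WF {M : Set W} {s : W} (hs : IsGLB M s) {a : Ordinal}
    {ha : a < omega1} (hsa : s = WF a ha) : s ∈ M := by
  have hswap : s.swap = WT a ha := by rw [hsa]; rfl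
  have hmem := mem_of_isLUB_of_eq_WT (W.isGLB_iff_isLUB_swap_image.1 hs) hswap
  exact (Function.LeftInverse.injective W.swap_swap).mem_set_image.1 hmem

/-- Every subset of `W` has a least upper bound and a greatest lower
bound in `W`; moreover if the least upper bound is a true value `T_α` then it belongs
to `M`, and if the greatest lower bound is a false value `F_α` then it belongs to `M`. -/
theorem every_subset_of_W_has_lub_and_glb :
    (∀ M : Set W, ∃ s : W, IsLUB M s) ∧
    (∀ M : Set W, ∃ s : W, IsGLB M s) ∧
    (∀ M : Set W, ∀ s : W, IsLUB M s →
      ∀ (a : Ordinal) (ha : a < omega1), s = WT a ha → s ∈ M) ∧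
    (∀ M : Set W, ∀ s : W, IsGLB M s →
      ∀ (a : Ordinal) (ha : a < omega1), s = WF a ha → s ∈ M) :=
  ⟨fun M => ⟨_, isLUB_Wsup M⟩, fun M => ⟨_, isGLB_swap_Wsup_swap_image M⟩,
    fun _ _ hs _ _ => mem_of_isLUB_of_eq_WT hs, fun _ _ hs _ _ => mem_of_isGLB_of_eq_WF hs⟩

end ILP
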